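/- arXiv:math/0207184 — 7 statements merged into one kernel-verified Lean document; each statement's English description precedes it below -/
import Mathlib

section
/- Let Λ' be a clean sublattice of finite index N in a lattice Λ ⊂ ℝ^L, and let V0 = {λ ∈ Λ : ‖λ‖ < ‖λ − s‖ for all nonzero s ∈ Λ'}. Then V0 contains exactly one element from each coset of Λ' in Λ; in particular |V0| = N. -/
/-- `Λ` is a (full-rank) lattice in `ℝ^L`: the `ℤ`-span of the rows of an invertible
real `L × L` matrix, i.e. the `ℤ`-span of an `ℝ`-basis. -/
def IsLattice {L : ℕ} (Λ : AddSubgroup (EuclideanSpace ℝ (Fin L))) : Prop :=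
  ∃ b : Module.Basis (Fin L) ℝ (EuclideanSpace ℝ (Fin L)),
    Λ = AddSubgroup.closure (Set.range ⇑b)

/-- `Λ'` is clean in `Λ`: every point of `Λ` has a unique nearest point of `Λ'`
in the Euclidean norm. -/
def IsClean {L : ℕ} (Λ Λ' : AddSubgroup (EuclideanSpace ℝ (Fin L))) : Prop :=
  ∀ x ∈ Λ, ∃! p, p ∈ Λ' ∧ ∀ q ∈ Λ', ‖x - p‖ ≤ ‖x - q‖

/-- The discrete Voronoi set `V0 = {λ ∈ Λ : ‖λ‖ < ‖λ - s‖ for all nonzero s ∈ Λ'}`. -/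
def voronoiSet {L : ℕ} (Λ Λ' : AddSubgroup (EuclideanSpace ℝ (Fin L))) :
    Set (EuclideanSpace ℝ (Fin L)) :=
  {x | x ∈ Λ ∧ ∀ s ∈ Λ', s ≠ 0 → ‖x‖ < ‖x - s‖}

/-!
A point `v ∈ Λ` lies in `V0` exactly when `0` is its unique nearest point of `Λ'`. Hence for
`x ∈ Λ` with nearest point `p ∈ Λ'` (unique by cleanness), `x - p` is a representative of
`x + Λ'` in `V0`; and two elements `v, w` of `V0` differing by `s = w - v ∈ Λ' \ {0}` would give
`‖v‖ < ‖w‖ < ‖v‖`. So `V0` is a set of coset representatives, of cardinality the index.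
-/

namespace voronoiSet

variable {L : ℕ} {Λ Λ' : AddSubgroup (EuclideanSpace ℝ (Fin L))}

theorem eq_of_sub_mem {v w : EuclideanSpace ℝ (Fin L)} (hv : v ∈ voronoiSet Λ Λ')
    (hw : w ∈ voronoiSet Λ Λ') (hvw : w - v ∈ Λ') : v = w := by
  by_contra hne
  have hlt : ‖v‖ < ‖w‖ := by
    simpa using hv.2 (v - w) (by simpa using Λ'.neg_mem hvw) (sub_ne_zero.mpr hne)
  have hgt : ‖w‖ < ‖v‖ := by
    simpa using hw.2 (w - v) hvw (sub_ne_zero.mpr (Ne.symm hne))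
  exact lt_asymm hlt hgt

theorem exists_sub_mem_of_isClean (hle : Λ' ≤ Λ) (hclean : IsClean Λ Λ')
    {x : EuclideanSpace ℝ (Fin L)} (hx : x ∈ Λ) : ∃ p ∈ Λ', x - p ∈ voronoiSet Λ Λ' := by
  obtain ⟨p, ⟨hp, hp_min⟩, hp_unique⟩ := hclean x hx
  refine ⟨p, hp, Λ.sub_mem hx (hle hp), fun s hs hs0 => ?_⟩
  rw [sub_sub]
  refine (hp_min (p + s) (Λ'.add_mem hp hs)).lt_of_ne fun heq => hs0 ?_
  -- `p + s` would be a second nearest point.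
  have hps : p + s = p :=
    hp_unique (p + s) ⟨Λ'.add_mem hp hs, fun q hq => heq.symm.le.trans (hp_min q hq)⟩
  exact add_eq_left.mp hps

theorem existsUnique_sub_mem (hle : Λ' ≤ Λ) (hclean : IsClean Λ Λ')
    {x : EuclideanSpace ℝ (Fin L)} (hx : x ∈ Λ) :
    ∃! v, v ∈ voronoiSet Λ Λ' ∧ v - x ∈ Λ' := by
  obtain ⟨p, hp, hxp⟩ := exists_sub_mem_of_isClean hle hclean hx
  refine ⟨x - p, ⟨hxp, by simpa using Λ'.neg_mem hp⟩, fun w ⟨hw, hwx⟩ => ?_⟩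
  refine (eq_of_sub_mem hxp hw ?_).symm
  simpa [sub_sub_eq_add_sub, add_sub_right_comm] using Λ'.add_mem hwx hp

noncomputable def equivQuotient (hle : Λ' ≤ Λ) (hclean : IsClean Λ Λ') :
    voronoiSet Λ Λ' ≃ Λ ⧸ Λ'.addSubgroupOf Λ :=
  Equiv.ofBijective (fun v => QuotientAddGroup.mk (⟨v, v.2.1⟩ : Λ)) <| by
    refine ⟨fun v w h => Subtype.ext (eq_of_sub_mem v.2 w.2 ?_), fun q => ?_⟩
    · rw [QuotientAddGroup.eq, AddSubgroup.mem_addSubgroupOf] at h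
      simpa [neg_add_eq_sub] using h
    · induction q using QuotientAddGroup.induction_on with
      | H x =>
        obtain ⟨v, ⟨hv, hvx⟩, -⟩ := existsUnique_sub_mem hle hclean x.2
        refine ⟨⟨v, hv⟩, ?_⟩
        rw [QuotientAddGroup.eq, AddSubgroup.mem_addSubgroupOf]
        simpa [neg_add_eq_sub] using Λ'.neg_mem hvx

theorem ncard_eq_index (hle : Λ' ≤ Λ) (hclean : IsClean Λ Λ') :
    (voronoiSet Λ Λ').ncard = (Λ'.addSubgroupOf Λ).index := by
  rw [← Nat.card_coe_set_eq, Nat.card_congr (equivQuotient hle hclean)]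
  rfl

end voronoiSet

theorem stmt1_general {L : ℕ} (Λ Λ' : AddSubgroup (EuclideanSpace ℝ (Fin L)))
    (hle : Λ' ≤ Λ) (N : ℕ)
    (hidx : (Λ'.addSubgroupOf Λ).index = N)
    (hclean : IsClean Λ Λ') :
    (∀ x ∈ Λ, ∃! v, v ∈ voronoiSet Λ Λ' ∧ v - x ∈ Λ') ∧
      (voronoiSet Λ Λ').ncard = N :=
  ⟨fun _ hx => voronoiSet.existsUnique_sub_mem hle hclean hx,
    hidx ▸ voronoiSet.ncard_eq_index hle hclean⟩

theorem stmt1 {L : ℕ} (Λ Λ' : AddSubgroup (EuclideanSpace ℝ (Fin L)))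
    (hΛ : IsLattice Λ) (hle : Λ' ≤ Λ) (N : ℕ) (hN : 0 < N)
    (hidx : (Λ'.addSubgroupOf Λ).index = N)
    (hclean : IsClean Λ Λ') :
    (∀ x ∈ Λ, ∃! v, v ∈ voronoiSet Λ Λ' ∧ v - x ∈ Λ') ∧
      (voronoiSet Λ Λ').ncard = N :=
  stmt1_general Λ Λ' hle N hidx hclean
end

section
/- Let L ≥ 1, let K be an L×L integer matrix satisfying K·Kᵀ = m·I_L for some positive integer m, and let Λ' ⊂ ℤ^L be the ℤ-span of the rows of K (a geometrically similar sublattice of ℤ^L). Then Λ' is clean in ℤ^L — i.e. every x ∈ ℤ^L has a unique nearest point of Λ' in the Euclidean norm — if and only if m is odd. -/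
/-!
The rows `r i` of `K` are pairwise orthogonal of squared length `m`, and (since `Kᵀ K = m I` as
well) every `x ∈ ℤ^L` is `∑ c i • r i` with `c = K x / m`. Hence
`‖x - ∑ a i • r i‖² = m ∑ (c i - a i)²`, the nearest points of `Λ'` are found by rounding each
`c i`, and the nearest point is unique iff no `c i` is a half-integer.
If `m` is odd, `k / m = n + 1/2` gives `2k = m (2n + 1)`, impossible by parity. If `m = 2h`,
the gcd `g` of the first row satisfies `g² ∣ 2h`, hence `g ∣ h`, so some `x ∈ ℤ^L` has
`⟨x, r 0⟩ = h`, i.e. `c 0 = 1/2`.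
-/

/-- The integer lattice `ℤ^L` inside `EuclideanSpace ℝ (Fin L)`:
the `ℤ`-span of the standard basis vectors. -/
noncomputable def Zlat (L : ℕ) : AddSubgroup (EuclideanSpace ℝ (Fin L)) :=
  AddSubgroup.closure (Set.range fun i => EuclideanSpace.single i (1 : ℝ))

/-- The `ℤ`-span of the rows of an integer matrix `K`, as a sublattice of `ℝ^L`. -/
noncomputable def rowLattice {L : ℕ} (K : Matrix (Fin L) (Fin L) ℤ) :
    AddSubgroup (EuclideanSpace ℝ (Fin L)) :=
  AddSubgroup.closure
    (Set.range fun i => (WithLp.equiv 2 (Fin L → ℝ)).symm fun j => (K i j : ℝ))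

open Finset Matrix

namespace Matrix

variable {ι : Type*} [Fintype ι] [DecidableEq ι]

theorem vecMul_vecMul_transpose_of_mul_transpose_eq {R : Type*} [CommSemiring R]
    {A : Matrix ι ι R} {m : R} (hA : A * Aᵀ = m • 1) (v : ι → R) :
    v ᵥ* A ᵥ* Aᵀ = m • v := by
  rw [vecMul_vecMul, hA, vecMul_smul, vecMul_one]

theorem vecMul_dotProduct_vecMul_of_mul_transpose_eq {R : Type*} [CommSemiring R]
    {A : Matrix ι ι R} {m : R} (hA : A * Aᵀ = m • 1) (v : ι → R) :
    v ᵥ* A ⬝ᵥ v ᵥ* A = m * (v ⬝ᵥ v) := by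
  rw [← dotProduct_mulVec, ← vecMul_transpose, vecMul_vecMul_transpose_of_mul_transpose_eq hA,
    dotProduct_smul, smul_eq_mul]

theorem vecMul_injective_of_mul_transpose_eq {R : Type*} [CommRing R] [IsDomain R]
    {A : Matrix ι ι R} {m : R} (hm : m ≠ 0) (hA : A * Aᵀ = m • 1) :
    Function.Injective (· ᵥ* A) := fun a b hab =>
  smul_right_injective _ hm <| by
    simp only at hab ⊢
    rw [← vecMul_vecMul_transpose_of_mul_transpose_eq hA, hab,
      vecMul_vecMul_transpose_of_mul_transpose_eq hA]

theorem transpose_mul_self_eq_of_mul_transpose_eq {K : Type*} [Field K] {A : Matrix ι ι K}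
    {m : K} (hm : m ≠ 0) (hA : A * Aᵀ = m • 1) : Aᵀ * A = m • 1 := by
  have h : A * (m⁻¹ • Aᵀ) = 1 := by
    rw [Matrix.mul_smul, hA, smul_smul, inv_mul_cancel₀ hm, one_smul]
  calc Aᵀ * A = m • (m⁻¹ • Aᵀ * A) := by
        rw [Matrix.smul_mul, smul_smul, mul_inv_cancel₀ hm, one_smul]
    _ = m • 1 := by rw [mul_eq_one_comm.mp h]

end Matrix

theorem Function.Injective.existsUnique_mem_range_and_iff {α β : Type*} {f : α → β}
    (hf : Function.Injective f) {P : β → Prop} :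
    (∃! y, y ∈ Set.range f ∧ P y) ↔ ∃! x, P (f x) := by
  constructor
  · rintro ⟨_, ⟨⟨x, rfl⟩, hx⟩, huniq⟩
    exact ⟨x, hx, fun x' hx' => hf (huniq _ ⟨⟨x', rfl⟩, hx'⟩)⟩
  · rintro ⟨x, hx, huniq⟩
    refine ⟨f x, ⟨⟨x, rfl⟩, hx⟩, ?_⟩
    rintro _ ⟨⟨x', rfl⟩, hx'⟩
    rw [huniq x' hx']

theorem existsUnique_forall_sum_le_iff {ι β M : Type*} [Fintype ι] [AddCommMonoid M]
    [PartialOrder M] [IsOrderedCancelAddMonoid M] (f : ι → β → M) :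
    (∃! a : ι → β, ∀ b : ι → β, ∑ i, f i (a i) ≤ ∑ i, f i (b i)) ↔
      ∀ i, ∃! n, ∀ k, f i n ≤ f i k := by
  classical
  have sum_update (a : ι → β) (i : ι) (k : β) :
      ∑ j, f j (Function.update a i k j) = f i k + ∑ j ∈ univ.erase i, f j (a j) := by
    simp_rw [Function.apply_update (fun j => f j), sum_update_of_mem (mem_univ i)]
    rw [sdiff_singleton_eq_erase]
  constructor
  · rintro ⟨a, ha, huniq⟩ i
    have hmin : ∀ k, f i (a i) ≤ f i k := fun k => by
      have := ha (Function.update a i k)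
      rwa [← Function.update_eq_self i a, sum_update, Function.update_eq_self i a, sum_update,
        add_le_add_iff_right] at this
    refine ⟨a i, hmin, fun n hn => ?_⟩
    have hglobal (b : ι → β) : ∑ j, f j (Function.update a i n j) ≤ ∑ j, f j (b j) :=
      calc ∑ j, f j (Function.update a i n j) ≤ ∑ j, f j (Function.update a i (a i) j) := by
            rw [sum_update, sum_update]; exact add_le_add_left (hn (a i)) _
        _ ≤ ∑ j, f j (b j) := by rw [Function.update_eq_self]; exact ha b
    simpa using congrFun (huniq _ hglobal) i
  · intro h
    choose a ha huniq using h
    refine ⟨a, fun b => sum_le_sum fun i _ => ha i (b i),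
      fun b hb => funext fun i => huniq i _ ?_⟩
    have hle : ∀ j ∈ univ, f j (a j) ≤ f j (b j) := fun j _ => ha j (b j)
    have heq := (sum_eq_sum_iff_of_le hle).mp (le_antisymm (sum_le_sum hle) (hb a)) i (mem_univ i)
    exact fun k => heq ▸ ha i k

theorem quarter_le_sq_intCast_add_half (t : ℤ) : (1 / 4 : ℝ) ≤ ((t : ℝ) + 1 / 2) ^ 2 := by
  have ht : (0 : ℤ) ≤ t * (t + 1) := by rcases le_or_gt 0 t with h | h <;> nlinarith
  have : (0 : ℝ) ≤ t * (t + 1) := by exact_mod_cast ht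
  nlinarith

theorem existsUnique_nearest_int_iff (c : ℝ) :
    (∃! n : ℤ, ∀ k : ℤ, (c - n) ^ 2 ≤ (c - k) ^ 2) ↔ ∀ n : ℤ, c ≠ n + 1 / 2 := by
  constructor
  · rintro ⟨a, -, huniq⟩ n rfl
    have hnearest (n' : ℤ) (hn' : n' = n ∨ n' = n + 1) (k : ℤ) :
        ((n : ℝ) + 1 / 2 - n') ^ 2 ≤ ((n : ℝ) + 1 / 2 - k) ^ 2 := by
      have := quarter_le_sq_intCast_add_half (n - k)
      rcases hn' with rfl | rfl <;> push_cast at this ⊢ <;> nlinarith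
    have h₁ := huniq n (hnearest n (Or.inl rfl))
    have h₂ := huniq (n + 1) (hnearest _ (Or.inr rfl))
    omega
  · intro hc
    simp_rw [sq_le_sq]
    have hlt (b : ℤ) (hb : |c - b| ≤ 1 / 2) : |c - b| < 1 / 2 := by
      refine hb.lt_of_ne fun heq => ?_
      rcases abs_eq (by norm_num : (0 : ℝ) ≤ 1 / 2) |>.mp heq with h | h
      · exact hc b (by linarith)
      · exact hc (b - 1) (by push_cast; linarith)
    refine ⟨round c, round_le c, fun b hb => ?_⟩
    have hb' := hlt b ((hb (round c)).trans (abs_sub_round c))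
    have hr := hlt _ (abs_sub_round c)
    have : |((b - round c : ℤ) : ℝ)| < 1 := by
      push_cast
      calc |(b : ℝ) - round c| = |(c - round c) - (c - b)| := by ring_nf
        _ ≤ |c - round c| + |c - b| := abs_sub _ _
        _ < 1 := by linarith
    have := Int.abs_lt_one_iff.mp (by exact_mod_cast this)
    omega

theorem Int.dvd_of_sq_dvd_two_mul {g n : ℤ} (h : g ^ 2 ∣ 2 * n) : g ∣ n := by
  rcases Int.even_or_odd g with ⟨e, rfl⟩ | hg
  · obtain ⟨t, ht⟩ := h
    exact ⟨e * t, by linarith⟩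
  · exact (dvd_pow_self g two_ne_zero).trans
      ((Int.isCoprime_two_right.mpr hg).pow_left.dvd_of_dvd_mul_left h)

theorem exists_dotProduct_eq_of_dotProduct_self_eq_two_mul {ι : Type*} [Fintype ι]
    {w : ι → ℤ} {n : ℤ} (h : w ⬝ᵥ w = 2 * n) : ∃ v, w ⬝ᵥ v = n := by
  set I := Ideal.span (Set.range w)
  set g := Submodule.IsPrincipal.generator I
  have hg (i : ι) : g ∣ w i :=
    (Submodule.IsPrincipal.mem_iff_generator_dvd I).mp (Ideal.subset_span ⟨i, rfl⟩)
  have hsq : g ^ 2 ∣ 2 * n := h ▸ dvd_sum fun i _ => sq g ▸ mul_dvd_mul (hg i) (hg i)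
  obtain ⟨v, hv⟩ := Ideal.mem_span_range_iff_exists_fun.mp
    ((Submodule.IsPrincipal.mem_iff_generator_dvd I).mpr (Int.dvd_of_sq_dvd_two_mul hsq))
  exact ⟨v, by simp only [← hv, dotProduct, mul_comm]⟩

theorem intCast_div_natCast_ne_add_half {m : ℕ} (hm : Odd m) (k n : ℤ) :
    (k : ℝ) / m ≠ n + 1 / 2 := by
  intro h
  have hm0 : (m : ℝ) ≠ 0 := Nat.cast_ne_zero.mpr hm.pos.ne'
  have hk : 2 * k = m * (2 * n + 1) := by
    rw [div_eq_iff hm0] at h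
    exact_mod_cast (by linarith : (2 * k : ℝ) = m * (2 * n + 1))
  exact Int.not_even_iff_odd.mpr (Int.odd_mul.mpr ⟨by exact_mod_cast hm, odd_two_mul_add_one n⟩)
    (hk ▸ even_two_mul k)

section Lattice

variable {L : ℕ}

theorem mem_rowLattice_iff (K : Matrix (Fin L) (Fin L) ℤ) (p : EuclideanSpace ℝ (Fin L)) :
    p ∈ rowLattice K ↔ ∃ a : Fin L → ℤ, WithLp.toLp 2 (Int.cast ∘ (a ᵥ* K)) = p := by
  rw [rowLattice, ← Submodule.span_int_eq_addSubgroupClosure, Submodule.mem_toAddSubgroup,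
    Submodule.mem_span_range_iff_exists_fun]
  refine exists_congr fun a => Eq.congr_left ?_
  ext j
  simp [vecMul, dotProduct]

theorem Zlat_eq_rowLattice_one : Zlat L = rowLattice 1 := by
  rw [Zlat, rowLattice]
  congr! 3 with i
  ext j
  simp [one_apply, eq_comm]

theorem norm_sub_vecMul_sq {K : Matrix (Fin L) (Fin L) ℤ} {m : ℕ} (hm : m ≠ 0)
    (hK : K * Kᵀ = (m : ℤ) • 1) (v a : Fin L → ℤ) :
    ‖WithLp.toLp 2 (Int.cast ∘ v) - WithLp.toLp 2 (Int.cast ∘ (a ᵥ* K) : Fin L → ℝ)‖ ^ 2 =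
      m * ∑ i, (((K *ᵥ v) i : ℝ) / m - a i) ^ 2 := by
  set A := K.map (Int.castRingHom ℝ)
  have hA : A * Aᵀ = (m : ℝ) • 1 := by
    have := congrArg (Int.castRingHom ℝ).mapMatrix hK
    rwa [map_mul, map_zsmul, map_one, ← Int.cast_smul_eq_zsmul ℝ, Int.cast_natCast] at this
  have hmR : (m : ℝ) ≠ 0 := Nat.cast_ne_zero.mpr hm
  set c := (m : ℝ)⁻¹ • (A *ᵥ (Int.cast ∘ v))
  -- `Aᵀ A = m • 1`, so `c` are the coordinates of `v` in the basis of rows of `A`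
  have hv : (Int.cast ∘ v : Fin L → ℝ) = c ᵥ* A := by
    have := vecMul_vecMul_transpose_of_mul_transpose_eq (A := Aᵀ)
      (by rw [transpose_transpose]; exact transpose_mul_self_eq_of_mul_transpose_eq hmR hA)
      (Int.cast ∘ v)
    rw [transpose_transpose] at this
    rw [smul_vecMul, ← vecMul_transpose, this, smul_smul, inv_mul_cancel₀ hmR, one_smul]
  have ha : (Int.cast ∘ (a ᵥ* K) : Fin L → ℝ) = (Int.cast ∘ a) ᵥ* A :=
    funext (RingHom.map_vecMul (Int.castRingHom ℝ) K a)
  have hc (i : Fin L) : c i = ((K *ᵥ v) i : ℝ) / m := by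
    rw [div_eq_inv_mul]
    exact congrArg _ (RingHom.map_mulVec (Int.castRingHom ℝ) K v i).symm
  rw [← WithLp.toLp_sub, EuclideanSpace.real_norm_sq_eq, hv, ha, ← sub_vecMul]
  simp_rw [← hc]
  have := vecMul_dotProduct_vecMul_of_mul_transpose_eq hA (c - Int.cast ∘ a)
  simp only [dotProduct, ← sq] at this
  exact this

theorem isClean_rowLattice_iff {K : Matrix (Fin L) (Fin L) ℤ} {m : ℕ} (hm : m ≠ 0)
    (hK : K * Kᵀ = (m : ℤ) • 1) :
    IsClean (Zlat L) (rowLattice K) ↔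
      ∀ (v : Fin L → ℤ) (i : Fin L) (n : ℤ), ((K *ᵥ v) i : ℝ) / m ≠ n + 1 / 2 := by
  set φ : (Fin L → ℤ) → EuclideanSpace ℝ (Fin L) := fun a => WithLp.toLp 2 (Int.cast ∘ (a ᵥ* K))
  have hφ : Function.Injective φ := fun a b hab =>
    vecMul_injective_of_mul_transpose_eq (Int.natCast_ne_zero.mpr hm) hK <| funext fun i =>
      Int.cast_injective (α := ℝ) (congrFun (congrArg WithLp.ofLp hab) i)
  have hdist (v a b : Fin L → ℤ) :
      ‖WithLp.toLp 2 (Int.cast ∘ v) - φ a‖ ≤ ‖WithLp.toLp 2 (Int.cast ∘ v) - φ b‖ ↔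
        ∑ i, (((K *ᵥ v) i : ℝ) / m - a i) ^ 2 ≤ ∑ i, (((K *ᵥ v) i : ℝ) / m - b i) ^ 2 := by
    rw [← sq_le_sq₀ (norm_nonneg _) (norm_nonneg _), norm_sub_vecMul_sq hm hK,
      norm_sub_vecMul_sq hm hK, mul_le_mul_iff_right₀ (by positivity)]
  unfold IsClean
  rw [Zlat_eq_rowLattice_one]
  simp only [mem_rowLattice_iff, vecMul_one, forall_exists_index, forall_apply_eq_imp_iff]
  refine forall_congr' fun v => ?_
  refine (hφ.existsUnique_mem_range_and_iff (P := fun p =>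
    ∀ b, ‖WithLp.toLp 2 (Int.cast ∘ v) - p‖ ≤ ‖WithLp.toLp 2 (Int.cast ∘ v) - φ b‖)).trans ?_
  simp only [hdist]
  rw [existsUnique_forall_sum_le_iff (fun i (n : ℤ) => (((K *ᵥ v) i : ℝ) / m - n) ^ 2)]
  simp only [existsUnique_nearest_int_iff]

end Lattice

theorem stmt6 {L : ℕ} (hL : 1 ≤ L) (K : Matrix (Fin L) (Fin L) ℤ) (m : ℕ) (hm : 0 < m)
    (hK : K * K.transpose = (m : ℤ) • (1 : Matrix (Fin L) (Fin L) ℤ)) :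
    IsClean (Zlat L) (rowLattice K) ↔ Odd m := by
  rw [isClean_rowLattice_iff hm.ne' hK]
  refine ⟨fun hclean => ?_, fun hodd v i n => intCast_div_natCast_ne_add_half hodd _ n⟩
  by_contra hodd
  obtain ⟨h, rfl⟩ := Nat.not_odd_iff_even.mp hodd
  let i₀ : Fin L := ⟨0, hL⟩
  have hrow : K i₀ ⬝ᵥ K i₀ = 2 * h := by
    have := congrFun (congrFun hK i₀) i₀
    rw [mul_apply', Matrix.smul_apply, one_apply_eq] at this
    simpa [two_mul] using this
  obtain ⟨v, hv⟩ := exists_dotProduct_eq_of_dotProduct_self_eq_two_mul hrow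
  refine hclean v i₀ 0 ?_
  rw [show (K *ᵥ v) i₀ = h from hv]
  have hh : (h : ℝ) ≠ 0 := Nat.cast_ne_zero.mpr (by omega)
  push_cast
  field_simp
  ring
end

section
/- For a positive integer N, the lattice ℤ² has a geometrically similar sublattice of index N if and only if N = a² + b² for some integers a, b. (Sufficiency is realized by multiplication of ℤ² ≅ ℤ[i] by the Gaussian integer ξ = a + bi.) -/
/-- `Λ'` is a geometrically similar sublattice of `Λ` of index `N`:
`Λ' = {c·O(v) : v ∈ Λ}` for some `c > 0` and orthogonal matrix `O`, with
`[Λ : Λ'] = N`. -/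
noncomputable def IsSimilarSublattice {L : ℕ}
    (Λ Λ' : AddSubgroup (EuclideanSpace ℝ (Fin L))) (N : ℕ) : Prop :=
  Λ' ≤ Λ ∧ (Λ'.addSubgroupOf Λ).index = N ∧
    ∃ (c : ℝ) (O : Matrix (Fin L) (Fin L) ℝ), 0 < c ∧ O * O.transpose = 1 ∧
      Λ' = AddSubgroup.map (c • Matrix.toEuclideanLin O).toAddMonoidHom Λ

/-!
Identify `ℤ²` with the Gaussian integers via `z ↦ (re z, im z)`. A similarity `c • O` mapping
`ℤ²` into itself sends `e₀, e₁` to Gaussian integers `ξ, η` that are orthogonal and of equal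
length, which forces `η = ±iξ`; so its image is the principal ideal `(ξ)`, whose index is the norm
`N(ξ) = a² + b²`. Conversely, multiplication by `ξ = a + bi` is the similarity `√N(ξ) • rotation`
with image `(ξ)`.
-/

open Zsqrtd Matrix

local notation "ℤ[i]" => GaussianInt

theorem AddSubgroup.closure_pair_neg_right {G : Type*} [AddGroup G] (x y : G) :
    closure {x, -y} = closure {x, y} := by
  rw [Set.insert_eq, Set.insert_eq, closure_union, closure_union, ← Set.neg_singleton,
    closure_neg]

theorem smul_toEuclideanLin_single_apply {𝕜 m n : Type*} [RCLike 𝕜] [Fintype n] [DecidableEq n]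
    (c : 𝕜) (O : Matrix m n 𝕜) (i : m) (j : n) :
    (c • toEuclideanLin O) (EuclideanSpace.single j 1) i = c * O i j := by
  simp [toLpLin_apply, mulVec_single]

theorem Zlat_two_eq_closure :
    Zlat 2 = AddSubgroup.closure {EuclideanSpace.single 0 1, EuclideanSpace.single 1 1} := by
  rw [Zlat]
  congr 1
  ext v
  simp [Fin.exists_fin_two, eq_comm]

theorem map_Zlat_two (f : EuclideanSpace ℝ (Fin 2) →+ EuclideanSpace ℝ (Fin 2)) :
    (Zlat 2).map f =
      AddSubgroup.closure {f (EuclideanSpace.single 0 1), f (EuclideanSpace.single 1 1)} := by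
  rw [Zlat_two_eq_closure, AddMonoidHom.map_closure, Set.image_pair]

namespace GaussianInt

noncomputable def basisReIm : Module.Basis (Fin 2) ℤ ℤ[i] :=
  .ofEquivFun
    { toFun := fun z => ![z.re, z.im]
      invFun := fun f => ⟨f 0, f 1⟩
      map_add' := fun x y => by ext i; fin_cases i <;> simp
      map_smul' := fun n x => by ext i; fin_cases i <;> simp
      left_inv := fun z => by simp
      right_inv := fun f => by ext i; fin_cases i <;> simp }

instance : Module.Free ℤ ℤ[i] := .of_basis basisReIm

instance : Module.Finite ℤ ℤ[i] := .of_basis basisReIm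

theorem algebraNorm_eq_norm (ξ : ℤ[i]) : Algebra.norm ℤ ξ = ξ.norm := by
  rw [Algebra.norm_eq_matrix_det basisReIm, det_fin_two]
  simp [Algebra.leftMulMatrix_eq_repr_mul, basisReIm, norm_def]

theorem index_span_singleton (ξ : ℤ[i]) :
    (Ideal.span {ξ}).toAddSubgroup.index = ξ.norm.natAbs := by
  rw [← algebraNorm_eq_norm, ← Ideal.absNorm_span_singleton, Ideal.absNorm_apply]
  rfl

theorem re_smul_one_add_im_smul_sqrtd (z : ℤ[i]) : z = z.re • 1 + z.im • sqrtd := by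
  ext <;> simp

theorem closure_one_sqrtd : AddSubgroup.closure {1, sqrtd} = (⊤ : AddSubgroup ℤ[i]) := by
  refine eq_top_iff.2 fun z _ => ?_
  rw [re_smul_one_add_im_smul_sqrtd z]
  exact add_mem (zsmul_mem (AddSubgroup.subset_closure (by simp)) _)
    (zsmul_mem (AddSubgroup.subset_closure (by simp)) _)

theorem toAddSubgroup_span_singleton (ξ : ℤ[i]) :
    (Ideal.span {ξ}).toAddSubgroup = AddSubgroup.closure {ξ, ξ * sqrtd} := by
  have hrange : (Ideal.span {ξ}).toAddSubgroup = (⊤ : AddSubgroup ℤ[i]).map (.mulLeft ξ) := by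
    ext x
    simp [Ideal.mem_span_singleton', eq_comm, mul_comm]
  rw [hrange, ← closure_one_sqrtd, AddMonoidHom.map_closure, Set.image_pair]
  simp

theorem eq_mul_sqrtd_or_eq_neg_mul_sqrtd {z w : ℤ[i]} (hz : z ≠ 0)
    (horth : z.re * w.re + z.im * w.im = 0) (hnorm : w.norm = z.norm) :
    w = z * sqrtd ∨ w = -(z * sqrtd) := by
  have hn : z.norm ≠ 0 := norm_eq_zero.not.2 hz
  obtain ⟨a, b⟩ := z
  obtain ⟨p, q⟩ := w
  simp only [norm_def] at hn hnorm horth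
  replace hn : a * a + b * b ≠ 0 := by contrapose! hn; linear_combination hn
  -- Lagrange's identity `(aq - bp)² + (ap + bq)² = (a² + b²)(p² + q²)`, where `ap + bq = 0`
  have hdet : (a * q - b * p - (a * a + b * b)) * (a * q - b * p + (a * a + b * b)) = 0 := by
    linear_combination (a * a + b * b) * hnorm - (a * p + b * q) * horth
  rcases mul_eq_zero.1 hdet with h | h
  · left
    have hp : p = -b := mul_left_cancel₀ hn (by linear_combination a * horth - b * h)
    have hq : q = a := mul_left_cancel₀ hn (by linear_combination a * h + b * horth)
    ext <;> simp [hp, hq]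
  · right
    have hp : p = b := mul_left_cancel₀ hn (by linear_combination a * horth - b * h)
    have hq : q = -a := mul_left_cancel₀ hn (by linear_combination a * h + b * horth)
    ext <;> simp [hp, hq]

noncomputable def toEuclidean : ℤ[i] →+ EuclideanSpace ℝ (Fin 2) where
  toFun z := !₂[((z.re : ℤ) : ℝ), ((z.im : ℤ) : ℝ)]
  map_zero' := by ext i; fin_cases i <;> simp
  map_add' x y := by ext i; fin_cases i <;> simp

@[simp] theorem toEuclidean_apply_zero (z : ℤ[i]) : toEuclidean z 0 = z.re := rfl

@[simp] theorem toEuclidean_apply_one (z : ℤ[i]) : toEuclidean z 1 = z.im := rfl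

theorem toEuclidean_injective : Function.Injective toEuclidean := fun z w h => by
  have h0 := congrArg (· 0) h
  have h1 := congrArg (· 1) h
  simp only [toEuclidean_apply_zero, toEuclidean_apply_one, Int.cast_inj] at h0 h1
  exact Zsqrtd.ext h0 h1

theorem toEuclidean_one : toEuclidean 1 = EuclideanSpace.single 0 1 := by
  ext i; fin_cases i <;> simp

theorem toEuclidean_sqrtd : toEuclidean sqrtd = EuclideanSpace.single 1 1 := by
  ext i; fin_cases i <;> simp

theorem map_toEuclidean_top : (⊤ : AddSubgroup ℤ[i]).map toEuclidean = Zlat 2 := by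
  rw [← closure_one_sqrtd, AddMonoidHom.map_closure, Set.image_pair, toEuclidean_one,
    toEuclidean_sqrtd, Zlat_two_eq_closure]

theorem index_map_toEuclidean_addSubgroupOf (S : AddSubgroup ℤ[i]) :
    ((S.map toEuclidean).addSubgroupOf (Zlat 2)).index = S.index := by
  rw [← map_toEuclidean_top]
  exact (S.relIndex_map_map_of_injective ⊤ toEuclidean_injective).trans S.relIndex_top_right

def mulMatrix (ξ : ℤ[i]) : Matrix (Fin 2) (Fin 2) ℝ :=
  !![(ξ.re : ℤ), -(ξ.im : ℤ); (ξ.im : ℤ), (ξ.re : ℤ)]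

theorem toEuclideanLin_mulMatrix (ξ z : ℤ[i]) :
    toEuclideanLin (mulMatrix ξ) (toEuclidean z) = toEuclidean (ξ * z) := by
  ext i
  fin_cases i <;> simp [mulMatrix, toLpLin_apply, dotProduct]
  ring

theorem mulMatrix_mul_transpose (ξ : ℤ[i]) :
    mulMatrix ξ * (mulMatrix ξ)ᵀ = (ξ.norm : ℝ) • 1 := by
  ext i j
  fin_cases i <;> fin_cases j <;> simp [mulMatrix, mul_apply, norm_def] <;> ring

noncomputable def gaussianSublattice (ξ : ℤ[i]) : AddSubgroup (EuclideanSpace ℝ (Fin 2)) :=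
  (Ideal.span {ξ}).toAddSubgroup.map toEuclidean

theorem gaussianSublattice_le (ξ : ℤ[i]) : gaussianSublattice ξ ≤ Zlat 2 :=
  map_toEuclidean_top ▸ AddSubgroup.map_mono le_top

theorem index_gaussianSublattice (ξ : ℤ[i]) :
    ((gaussianSublattice ξ).addSubgroupOf (Zlat 2)).index = ξ.norm.natAbs := by
  rw [gaussianSublattice, index_map_toEuclidean_addSubgroupOf, index_span_singleton]

theorem gaussianSublattice_eq_closure (ξ : ℤ[i]) :
    gaussianSublattice ξ = AddSubgroup.closure {toEuclidean ξ, toEuclidean (ξ * sqrtd)} := by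
  rw [gaussianSublattice, toAddSubgroup_span_singleton, AddMonoidHom.map_closure, Set.image_pair]

theorem eq_mul_sqrtd_or_eq_neg_mul_sqrtd_of_similarity {c : ℝ} {O : Matrix (Fin 2) (Fin 2) ℝ}
    (hc : 0 < c) (hO : O * Oᵀ = 1) {z w : ℤ[i]}
    (hz : toEuclidean z = (c • toEuclideanLin O) (EuclideanSpace.single 0 1))
    (hw : toEuclidean w = (c • toEuclideanLin O) (EuclideanSpace.single 1 1)) :
    w = z * sqrtd ∨ w = -(z * sqrtd) := by
  obtain ⟨h00, h01, h11⟩ : O 0 0 * O 0 0 + O 1 0 * O 1 0 = 1 ∧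
      O 0 0 * O 0 1 + O 1 0 * O 1 1 = 0 ∧ O 0 1 * O 0 1 + O 1 1 * O 1 1 = 1 := by
    have hOO : Oᵀ * O = 1 := mul_eq_one_comm.1 hO
    simp [← Matrix.ext_iff, Fin.forall_fin_two, mul_apply] at hOO
    exact ⟨hOO.1.1, hOO.1.2, hOO.2.2⟩
  have hcoord (u : ℤ[i]) (j : Fin 2)
      (hu : toEuclidean u = (c • toEuclideanLin O) (EuclideanSpace.single j 1)) :
      (u.re : ℝ) = c * O 0 j ∧ (u.im : ℝ) = c * O 1 j := by
    rw [← toEuclidean_apply_zero, ← toEuclidean_apply_one, hu, smul_toEuclideanLin_single_apply,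
      smul_toEuclideanLin_single_apply]
    exact ⟨rfl, rfl⟩
  obtain ⟨ha, hb⟩ := hcoord z 0 hz
  obtain ⟨hp, hq⟩ := hcoord w 1 hw
  have hz_norm : (z.norm : ℝ) = c ^ 2 := by
    push_cast [norm_def]
    rw [ha, hb]
    linear_combination c ^ 2 * h00
  have hw_norm : (w.norm : ℝ) = c ^ 2 := by
    push_cast [norm_def]
    rw [hp, hq]
    linear_combination c ^ 2 * h11
  have horth : (z.re * w.re + z.im * w.im : ℝ) = 0 := by
    rw [ha, hb, hp, hq]
    linear_combination c ^ 2 * h01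
  refine eq_mul_sqrtd_or_eq_neg_mul_sqrtd (norm_pos.1 ?_) (by exact_mod_cast horth)
    (by exact_mod_cast hw_norm.trans hz_norm.symm)
  exact_mod_cast hz_norm ▸ pow_pos hc 2

theorem _root_.IsSimilarSublattice.exists_eq_gaussianSublattice
    {Λ' : AddSubgroup (EuclideanSpace ℝ (Fin 2))} {N : ℕ}
    (h : IsSimilarSublattice (Zlat 2) Λ' N) : ∃ ξ : ℤ[i], Λ' = gaussianSublattice ξ := by
  obtain ⟨hle, -, c, O, hc, hO, rfl⟩ := h
  have hcolumn (j : Fin 2) :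
      ∃ z, toEuclidean z = (c • toEuclideanLin O) (EuclideanSpace.single j 1) := by
    have hmem := hle (AddSubgroup.mem_map_of_mem _ (AddSubgroup.subset_closure ⟨j, rfl⟩))
    rw [← map_toEuclidean_top] at hmem
    obtain ⟨z, -, hz⟩ := hmem
    exact ⟨z, hz⟩
  obtain ⟨z, hz⟩ := hcolumn 0
  obtain ⟨w, hw⟩ := hcolumn 1
  refine ⟨z, ?_⟩
  rw [map_Zlat_two, gaussianSublattice_eq_closure]
  simp only [LinearMap.toAddMonoidHom_coe, ← hz, ← hw]
  rcases eq_mul_sqrtd_or_eq_neg_mul_sqrtd_of_similarity hc hO hz hw with rfl | rfl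
  · rfl
  · rw [map_neg, AddSubgroup.closure_pair_neg_right]

theorem isSimilarSublattice_gaussianSublattice {ξ : ℤ[i]} (hξ : ξ ≠ 0) :
    IsSimilarSublattice (Zlat 2) (gaussianSublattice ξ) ξ.norm.natAbs := by
  have hn : (0 : ℝ) < ξ.norm := by exact_mod_cast norm_pos.2 hξ
  set c := √(ξ.norm : ℝ)
  have hc : 0 < c := Real.sqrt_pos.2 hn
  have hc2 : c ^ 2 = ξ.norm := Real.sq_sqrt hn.le
  refine ⟨gaussianSublattice_le ξ, index_gaussianSublattice ξ, c, c⁻¹ • mulMatrix ξ, hc, ?_, ?_⟩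
  · rw [transpose_smul, smul_mul, Matrix.mul_smul, mulMatrix_mul_transpose, smul_smul, smul_smul, ← hc2]
    field_simp
    exact one_smul _ _
  · have hscale : c • toEuclideanLin (c⁻¹ • mulMatrix ξ) = toEuclideanLin (mulMatrix ξ) := by
      rw [map_smul, smul_smul, mul_inv_cancel₀ hc.ne', one_smul]
    rw [hscale, map_Zlat_two, gaussianSublattice_eq_closure, ← toEuclidean_one,
      ← toEuclidean_sqrtd]
    simp only [LinearMap.toAddMonoidHom_coe, toEuclideanLin_mulMatrix, mul_one]

end GaussianInt

open GaussianInt in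
theorem stmt8 (N : ℕ) (hN : 0 < N) :
    (∃ Λ' : AddSubgroup (EuclideanSpace ℝ (Fin 2)), IsSimilarSublattice (Zlat 2) Λ' N) ↔
      ∃ a b : ℤ, (N : ℤ) = a ^ 2 + b ^ 2 := by
  constructor
  · rintro ⟨Λ', hΛ'⟩
    obtain ⟨ξ, rfl⟩ := hΛ'.exists_eq_gaussianSublattice
    refine ⟨ξ.re, ξ.im, ?_⟩
    rw [← hΛ'.2.1, index_gaussianSublattice, abs_natCast_norm, norm_def]
    ring
  · rintro ⟨a, b, hab⟩
    have hnorm : (⟨a, b⟩ : ℤ[i]).norm = N := by rw [norm_def, hab]; ring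
    have hξ : (⟨a, b⟩ : ℤ[i]) ≠ 0 := by
      rw [← norm_pos, hnorm]
      exact_mod_cast hN
    refine ⟨gaussianSublattice ⟨a, b⟩, ?_⟩
    convert isSimilarSublattice_gaussianSublattice hξ
    rw [hnorm, Int.natAbs_natCast]
end

section
/- Let L ≥ 1 be odd. For a positive integer N, the lattice ℤ^L has a geometrically similar sublattice of index N if and only if N = m^L for some positive integer m (and such a sublattice is given by m·ℤ^L). -/
/-!
A similarity `c • O` that maps `ℤ^L` into itself has an integer matrix `M = c • O`, and the index
of the image lattice is `|det M|`. From `M * Mᵀ = c² • 1` the scalar `K = c²` is a positive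
integer with `(det M)² = K ^ L`; for odd `L` this forces `|det M| = m ^ L` (and `K = m²`).
-/

open Matrix Function

lemma LinearMap.index_range_eq_natAbs_det {M : Type*} [AddCommGroup M] [Module.Free ℤ M]
    [Module.Finite ℤ M] (g : M →ₗ[ℤ] M) (hg : Injective g) :
    (LinearMap.range g).toAddSubgroup.index = (LinearMap.det g).natAbs :=
  ((LinearMap.range g).natAbs_det_equiv (LinearEquiv.ofInjective g hg)).symm

lemma Nat.exists_eq_pow_of_sq_eq_pow {a b L : ℕ} (hL : Odd L) (h : a ^ 2 = b ^ L) :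
    ∃ m, a = m ^ L ∧ b = m ^ 2 := by
  obtain ⟨t, rfl⟩ := hL
  rcases Nat.eq_zero_or_pos b with rfl | hb
  · exact ⟨0, by simpa using h, by simp⟩
  have hdvd : b ^ t ∣ a := by
    rw [← Nat.pow_dvd_pow_iff two_ne_zero, h, ← pow_mul]
    exact pow_dvd_pow b (by omega)
  obtain ⟨m, rfl⟩ := hdvd
  have hm : m ^ 2 = b := by
    rw [mul_pow, ← pow_mul, pow_succ, mul_comm t 2] at h
    exact Nat.eq_of_mul_eq_mul_left (pow_pos hb _) h
  exact ⟨m, by rw [← hm]; ring, hm.symm⟩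

lemma Matrix.det_sq_of_mul_transpose_eq_smul_one {n R : Type*} [Fintype n] [DecidableEq n]
    [CommRing R] {A : Matrix n n R} {k : R} (h : A * Aᵀ = k • 1) :
    A.det ^ 2 = k ^ Fintype.card n := by
  calc A.det ^ 2 = (A * Aᵀ).det := by rw [det_mul, det_transpose, sq]
    _ = k ^ Fintype.card n := by rw [h, det_smul, det_one, mul_one]

lemma Matrix.exists_int_mul_transpose_eq_smul_one {n : Type*} [Fintype n] [DecidableEq n]
    [Nonempty n] {M : Matrix n n ℤ} {c : ℝ} {O : Matrix n n ℝ} (hO : O * Oᵀ = 1)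
    (hM : M.map (Int.cast : ℤ → ℝ) = c • O) :
    ∃ K : ℤ, (K : ℝ) = c ^ 2 ∧ M * Mᵀ = K • 1 := by
  have h : (M * Mᵀ).map (Int.cast : ℤ → ℝ) = c ^ 2 • (1 : Matrix n n ℝ) := by
    rw [show (Int.cast : ℤ → ℝ) = Int.castRingHom ℝ from rfl, Matrix.map_mul, transpose_map,
      Int.coe_castRingHom, hM, transpose_smul, smul_mul_smul_comm, hO, sq]
  obtain ⟨i⟩ := ‹Nonempty n›
  have hK : (((M * Mᵀ) i i : ℤ) : ℝ) = c ^ 2 := by simpa using congr($h i i)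
  refine ⟨(M * Mᵀ) i i, hK, ?_⟩
  generalize (M * Mᵀ) i i = K at hK
  ext a b
  have hab := congr($h a b)
  rw [map_apply, smul_apply, ← hK, one_apply] at hab
  rw [smul_apply, one_apply]
  split_ifs at hab ⊢ <;> simpa using hab

noncomputable def intVecHom (L : ℕ) : (Fin L → ℤ) →+ EuclideanSpace ℝ (Fin L) :=
  (EuclideanSpace.equiv (Fin L) ℝ).symm.toLinearMap.toAddMonoidHom.comp
    ((Int.castAddHom ℝ).compLeft (Fin L))

@[simp] lemma intVecHom_apply {L : ℕ} (v : Fin L → ℤ) (i : Fin L) : intVecHom L v i = v i := rfl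

lemma intVecHom_injective (L : ℕ) : Injective (intVecHom L) := fun v w h =>
  funext fun i => by simpa using congr(($h : EuclideanSpace ℝ (Fin L)) i)

lemma range_intVecHom (L : ℕ) : (intVecHom L).range = Zlat L := by
  have h : AddSubgroup.closure (Set.range fun i : Fin L => (Pi.single i 1 : Fin L → ℤ)) = ⊤ := by
    refine eq_top_iff.mpr fun v _ => ?_
    rw [← Finset.univ_sum_single v]
    refine sum_mem fun i _ => ?_
    rw [show Pi.single i (v i) = v i • (Pi.single i 1 : Fin L → ℤ) by simp [← Pi.single_smul]]
    exact zsmul_mem (AddSubgroup.subset_closure (Set.mem_range_self i)) (v i)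
  rw [AddMonoidHom.range_eq_map, ← h, AddMonoidHom.map_closure, Zlat, ← Set.range_comp]
  congr 2
  ext i j
  simp [Pi.single_apply]

lemma intVecHom_mulVec {L : ℕ} (M : Matrix (Fin L) (Fin L) ℤ) (v : Fin L → ℤ) :
    intVecHom L (M *ᵥ v) = toEuclideanLin (M.map (Int.cast : ℤ → ℝ)) (intVecHom L v) := by
  ext i
  exact (Int.castRingHom ℝ).map_mulVec M v i

lemma map_toEuclideanLin_intCast_Zlat {L : ℕ} (M : Matrix (Fin L) (Fin L) ℤ) :
    (Zlat L).map (toEuclideanLin (M.map (Int.cast : ℤ → ℝ))).toAddMonoidHom =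
      (LinearMap.range (toLin' M)).toAddSubgroup.map (intVecHom L) := by
  rw [← range_intVecHom, AddMonoidHom.range_eq_map, AddSubgroup.map_map, LinearMap.range_eq_map,
    Submodule.map_toAddSubgroup, Submodule.top_toAddSubgroup, AddSubgroup.map_map]
  congr 1
  exact AddMonoidHom.ext fun v => (intVecHom_mulVec M v).symm

lemma map_toEuclideanLin_intCast_Zlat_le {L : ℕ} (M : Matrix (Fin L) (Fin L) ℤ) :
    (Zlat L).map (toEuclideanLin (M.map (Int.cast : ℤ → ℝ))).toAddMonoidHom ≤ Zlat L := by
  rw [map_toEuclideanLin_intCast_Zlat, ← range_intVecHom]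
  exact AddSubgroup.map_le_range _ _

lemma relIndex_map_toEuclideanLin_intCast_Zlat {L : ℕ} (M : Matrix (Fin L) (Fin L) ℤ)
    (hM : M.det ≠ 0) :
    ((Zlat L).map (toEuclideanLin (M.map (Int.cast : ℤ → ℝ))).toAddMonoidHom).relIndex (Zlat L) =
      M.det.natAbs := by
  have hinj : Injective (toLin' M) := by
    rw [← LinearMap.ker_eq_bot, LinearMap.ker_eq_bot']
    intro v hv
    by_contra hv0
    exact hM (exists_mulVec_eq_zero_iff.mp ⟨v, hv0, hv⟩)
  rw [map_toEuclideanLin_intCast_Zlat, ← range_intVecHom, AddMonoidHom.range_eq_map,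
    AddSubgroup.relIndex_map_map_of_injective _ _ (intVecHom_injective L),
    AddSubgroup.relIndex_top_right, LinearMap.index_range_eq_natAbs_det _ hinj,
    LinearMap.det_toLin']

lemma exists_intMatrix_of_map_Zlat_le {L : ℕ} {A : Matrix (Fin L) (Fin L) ℝ}
    (h : (Zlat L).map (toEuclideanLin A).toAddMonoidHom ≤ Zlat L) :
    ∃ M : Matrix (Fin L) (Fin L) ℤ, M.map (Int.cast : ℤ → ℝ) = A := by
  have hcol : ∀ j, toEuclideanLin A (EuclideanSpace.single j 1) ∈ (intVecHom L).range := fun j =>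
    range_intVecHom L ▸ h (AddSubgroup.mem_map_of_mem _
      (AddSubgroup.subset_closure (Set.mem_range_self j)))
  choose w hw using hcol
  refine ⟨Matrix.of fun i j => w j i, ?_⟩
  ext i j
  simpa [mulVec_single_one] using congr(($(hw j) : EuclideanSpace ℝ (Fin L)) i)

lemma IsSimilarSublattice.exists_intMatrix {L N : ℕ} {Λ' : AddSubgroup (EuclideanSpace ℝ (Fin L))}
    (h : IsSimilarSublattice (Zlat L) Λ' N) :
    ∃ (c : ℝ) (O : Matrix (Fin L) (Fin L) ℝ) (M : Matrix (Fin L) (Fin L) ℤ),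
      0 < c ∧ O * Oᵀ = 1 ∧ M.map (Int.cast : ℤ → ℝ) = c • O ∧ N = M.det.natAbs := by
  obtain ⟨hle, rfl, c, O, hc, hO, rfl⟩ := h
  rw [← map_smul] at hle ⊢
  obtain ⟨M, hM⟩ := exists_intMatrix_of_map_Zlat_le hle
  have hdet : M.det ≠ 0 := by
    have : ((M.det : ℤ) : ℝ) = c ^ L * O.det := by
      rw [Int.cast_det, hM, det_smul, Fintype.card_fin]
    exact Int.cast_ne_zero.mp (this ▸ mul_ne_zero (pow_ne_zero _ hc.ne')
      (det_ne_zero_of_right_inverse hO))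
  rw [← hM]
  exact ⟨c, O, M, hc, hO, hM, relIndex_map_toEuclideanLin_intCast_Zlat M hdet⟩

lemma IsSimilarSublattice.exists_eq_pow {L N : ℕ} (hL : Odd L)
    {Λ' : AddSubgroup (EuclideanSpace ℝ (Fin L))} (h : IsSimilarSublattice (Zlat L) Λ' N) :
    ∃ m : ℕ, 0 < m ∧ N = m ^ L := by
  obtain ⟨c, O, M, hc, hO, hM, rfl⟩ := h.exists_intMatrix
  have : Nonempty (Fin L) := ⟨⟨0, hL.pos⟩⟩
  obtain ⟨K, hKc, hK⟩ := exists_int_mul_transpose_eq_smul_one hO hM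
  have hsq : M.det.natAbs ^ 2 = K.natAbs ^ L := by
    rw [← Int.natAbs_pow, det_sq_of_mul_transpose_eq_smul_one hK, Fintype.card_fin,
      Int.natAbs_pow]
  obtain ⟨m, hN, hKm⟩ := Nat.exists_eq_pow_of_sq_eq_pow hL hsq
  refine ⟨m, Nat.pos_of_ne_zero ?_, hN⟩
  rintro rfl
  have hK0 : K = 0 := by simpa using hKm
  rw [hK0, Int.cast_zero] at hKc
  exact hc.ne' (pow_eq_zero_iff two_ne_zero |>.mp hKc.symm)

lemma isSimilarSublattice_natCast_smul_Zlat {L m : ℕ} (hm : 0 < m) :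
    IsSimilarSublattice (Zlat L)
      ((Zlat L).map ((m : ℝ) • (LinearMap.id : EuclideanSpace ℝ (Fin L) →ₗ[ℝ] _)).toAddMonoidHom)
      (m ^ L) := by
  obtain ⟨M, hM⟩ : ∃ M : Matrix (Fin L) (Fin L) ℤ, M = (m : ℤ) • 1 := ⟨_, rfl⟩
  have hA : (m : ℝ) • LinearMap.id = toEuclideanLin (M.map (Int.cast : ℤ → ℝ)) := by
    rw [show M.map (Int.cast : ℤ → ℝ) = (m : ℝ) • 1 by
      ext i j; rw [hM, map_apply, Matrix.smul_apply, Matrix.smul_apply, one_apply, one_apply]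
      split_ifs <;> simp,
      map_smul, toLpLin_one]
  have hdet : M.det = (m : ℤ) ^ L := by
    rw [hM, det_smul, det_one, mul_one, Fintype.card_fin]
  refine ⟨?_, ?_, m, 1, by exact_mod_cast hm, by simp, by rw [toLpLin_one]⟩
  · rw [hA]
    exact map_toEuclideanLin_intCast_Zlat_le M
  · rw [hA]
    refine (relIndex_map_toEuclideanLin_intCast_Zlat M (by rw [hdet]; positivity)).trans ?_
    rw [hdet, Int.natAbs_pow, Int.natAbs_natCast]

theorem stmt9_general {L : ℕ} (hL : Odd L) (N : ℕ) :
    ((∃ Λ' : AddSubgroup (EuclideanSpace ℝ (Fin L)), IsSimilarSublattice (Zlat L) Λ' N) ↔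
      ∃ m : ℕ, 0 < m ∧ N = m ^ L) ∧
    ∀ m : ℕ, 0 < m →
      IsSimilarSublattice (Zlat L)
        (AddSubgroup.map
          ((m : ℝ) • (LinearMap.id : EuclideanSpace ℝ (Fin L) →ₗ[ℝ] EuclideanSpace ℝ (Fin L))).toAddMonoidHom
          (Zlat L))
        (m ^ L) := by
  refine ⟨⟨fun ⟨_, h⟩ => h.exists_eq_pow hL, ?_⟩, fun _ hm => isSimilarSublattice_natCast_smul_Zlat hm⟩
  rintro ⟨m, hm, rfl⟩
  exact ⟨_, isSimilarSublattice_natCast_smul_Zlat hm⟩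

theorem stmt9 {L : ℕ} (hL : Odd L) (N : ℕ) (hN : 0 < N) :
    ((∃ Λ' : AddSubgroup (EuclideanSpace ℝ (Fin L)), IsSimilarSublattice (Zlat L) Λ' N) ↔
      ∃ m : ℕ, 0 < m ∧ N = m ^ L) ∧
    ∀ m : ℕ, 0 < m →
      IsSimilarSublattice (Zlat L)
        (AddSubgroup.map
          ((m : ℝ) • (LinearMap.id : EuclideanSpace ℝ (Fin L) →ₗ[ℝ] EuclideanSpace ℝ (Fin L))).toAddMonoidHom
          (Zlat L))
        (m ^ L) :=
  stmt9_general hL N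
end

section
/- Let ξ = a + bi be a nonzero Gaussian integer and identify ℤ² with the Gaussian integers ℤ[i] ⊂ ℂ ≅ ℝ². The sublattice ξ·ℤ[i] of ℤ[i] is clean — i.e. every Gaussian integer has a unique nearest point of ξ·ℤ[i] in the Euclidean norm — if and only if N = a² + b² is odd. -/
/-!
Multiplying by `conj ξ` scales all distances to `ξ·ℤ[i]` by `√N` and carries `ξ·ℤ[i]` onto
`N·ℤ[i]`, so the nearest points of `ξ·ℤ[i]` to `z` correspond to those of `N·ℤ[i]` to
`u = z·conj ξ`. For `N·ℤ[i]` the problem splits into rounding `u.re` and `u.im` to multiples of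
`N`, which is unambiguous unless a coordinate lies exactly halfway, i.e. `2 * (u.re - N t) = ± N`.
For odd `N` this cannot happen. For even `N` we have `a ≡ b (mod 2)`, and
`z = ((a + b)/2, (b - a)/2)` gives `2 * u.re = N`, so `z` has two nearest points.
-/

namespace Int

theorem abs_le_abs_sub_mul_add_abs_sub_mul {t t' : ℤ} (hne : t' ≠ t) (M c : ℤ) :
    |M| ≤ |c - M * t| + |c - M * t'| := by
  calc |M| ≤ |M * (t' - t)| :=
        le_mul_of_one_le_right (abs_nonneg M) (one_le_abs (sub_ne_zero.mpr hne)) |>.trans_eq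
          (abs_mul M _).symm
    _ = |(c - M * t) - (c - M * t')| := by ring_nf
    _ ≤ |c - M * t| + |c - M * t'| := abs_sub _ _

theorem abs_sub_mul_le_abs_sub_mul {M c t : ℤ} (h : 2 * |c - M * t| ≤ |M|) (t' : ℤ) :
    |c - M * t| ≤ |c - M * t'| := by
  rcases eq_or_ne t' t with rfl | hne
  · rfl
  linarith [abs_le_abs_sub_mul_add_abs_sub_mul hne M c]

theorem abs_sub_mul_lt_abs_sub_mul {M c t t' : ℤ} (h : 2 * |c - M * t| < |M|) (hne : t' ≠ t) :
    |c - M * t| < |c - M * t'| := by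
  linarith [abs_le_abs_sub_mul_add_abs_sub_mul hne M c]

theorem exists_two_mul_abs_sub_mul_le (c : ℤ) {M : ℤ} (hM : 0 < M) :
    ∃ t, 2 * |c - M * t| ≤ M := by
  have hc := Int.mul_ediv_add_emod c M
  have h₀ := Int.emod_nonneg c hM.ne'
  have h₁ := Int.emod_lt_of_pos c hM
  by_cases h : 2 * (c % M) ≤ M
  · refine ⟨c / M, ?_⟩
    rw [show c - M * (c / M) = c % M by linarith, abs_of_nonneg h₀]
    exact h
  · refine ⟨c / M + 1, ?_⟩
    rw [show c - M * (c / M + 1) = c % M - M by linarith, abs_of_neg (by linarith)]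
    linarith

end Int

namespace GaussianInt

theorem norm_toComplex_le_iff {x y : GaussianInt} :
    ‖(x : ℂ)‖ ≤ ‖(y : ℂ)‖ ↔ x.norm ≤ y.norm := by
  rw [← sq_le_sq₀ (_root_.norm_nonneg _) (_root_.norm_nonneg _), Complex.sq_norm,
    Complex.sq_norm, ← intCast_real_norm, ← intCast_real_norm, Int.cast_le]

theorem norm_mul_star_sub_norm_mul (ξ z w : GaussianInt) :
    (z * star ξ - ξ.norm * w).norm = ξ.norm * (z - ξ * w).norm := by
  rw [Zsqrtd.norm_eq_mul_conj, ← Zsqrtd.norm_conj ξ, ← Zsqrtd.norm_mul]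
  ring_nf

theorem norm_sub_mul_le_iff {ξ : GaussianInt} (hξ : ξ ≠ 0) (z w w' : GaussianInt) :
    (z - ξ * w).norm ≤ (z - ξ * w').norm ↔
      (z * star ξ - ξ.norm * w).norm ≤ (z * star ξ - ξ.norm * w').norm := by
  rw [norm_mul_star_sub_norm_mul, norm_mul_star_sub_norm_mul,
    mul_le_mul_iff_of_pos_left (norm_pos.mpr hξ)]

theorem norm_sub_intCast_mul (N : ℤ) (u w : GaussianInt) :
    (u - N * w).norm = (u.re - N * w.re) ^ 2 + (u.im - N * w.im) ^ 2 := by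
  simp only [Zsqrtd.norm, Zsqrtd.re_sub, Zsqrtd.im_sub, Zsqrtd.re_mul, Zsqrtd.im_mul,
    Zsqrtd.re_intCast, Zsqrtd.im_intCast]
  ring

theorem norm_sub_intCast_mul_le {N : ℤ} {u w : GaussianInt}
    (hre : 2 * |u.re - N * w.re| ≤ |N|) (him : 2 * |u.im - N * w.im| ≤ |N|) (w' : GaussianInt) :
    (u - N * w).norm ≤ (u - N * w').norm := by
  rw [norm_sub_intCast_mul, norm_sub_intCast_mul]
  gcongr ?_ + ?_ <;> rw [sq_le_sq]
  · exact Int.abs_sub_mul_le_abs_sub_mul hre _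
  · exact Int.abs_sub_mul_le_abs_sub_mul him _

theorem norm_sub_intCast_mul_lt {N : ℤ} {u w w' : GaussianInt}
    (hre : 2 * |u.re - N * w.re| < |N|) (him : 2 * |u.im - N * w.im| < |N|) (hne : w' ≠ w) :
    (u - N * w).norm < (u - N * w').norm := by
  rw [norm_sub_intCast_mul, norm_sub_intCast_mul]
  have hre' := Int.abs_sub_mul_le_abs_sub_mul hre.le w'.re
  have him' := Int.abs_sub_mul_le_abs_sub_mul him.le w'.im
  rw [← sq_le_sq] at hre' him'
  by_cases h : w'.re = w.re
  · have him'' := Int.abs_sub_mul_lt_abs_sub_mul him fun h' ↦ hne (Zsqrtd.ext h h')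
    rw [← sq_lt_sq] at him''
    linarith
  · have hre'' := Int.abs_sub_mul_lt_abs_sub_mul hre h
    rw [← sq_lt_sq] at hre''
    linarith

theorem existsUnique_norm_sub_intCast_mul_le {N : ℤ} (hN : 0 < N) (hodd : Odd N) (u : GaussianInt) :
    ∃! w : GaussianInt, ∀ w', (u - N * w).norm ≤ (u - N * w').norm := by
  have hround : ∀ c : ℤ, ∃ t, 2 * |c - N * t| < |N| := fun c ↦ by
    obtain ⟨t, ht⟩ := Int.exists_two_mul_abs_sub_mul_le c hN
    rw [abs_of_pos hN]
    refine ⟨t, ht.lt_of_ne fun h ↦ ?_⟩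
    exact Int.not_even_iff_odd.mpr hodd ⟨_, h.symm.trans (two_mul _)⟩
  obtain ⟨tr, hr⟩ := hround u.re
  obtain ⟨ti, hi⟩ := hround u.im
  refine ⟨⟨tr, ti⟩, norm_sub_intCast_mul_le hr.le hi.le, fun w hw ↦ ?_⟩
  by_contra hne
  exact (hw ⟨tr, ti⟩).not_gt (norm_sub_intCast_mul_lt hr hi hne)

theorem not_existsUnique_norm_sub_intCast_mul_le {N : ℤ} (hN : 0 < N) {u : GaussianInt}
    (hu : 2 * u.re = N) :
    ¬∃! w : GaussianInt, ∀ w', (u - N * w).norm ≤ (u - N * w').norm := by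
  intro huniq
  obtain ⟨t, ht⟩ := Int.exists_two_mul_abs_sub_mul_le u.im hN
  have hnearest : ∀ r : ℤ, 2 * |u.re - N * r| = |N| →
      ∀ w', (u - N * ⟨r, t⟩).norm ≤ (u - N * w').norm := fun r hr ↦
    norm_sub_intCast_mul_le hr.le (by rwa [abs_of_pos hN])
  have h₀ : 2 * |u.re - N * 0| = |N| := by rw [mul_zero, sub_zero, ← hu, abs_mul, abs_two]
  have h₁ : 2 * |u.re - N * 1| = |N| := by
    rw [mul_one, show u.re - N = -u.re by linarith, abs_neg, ← hu, abs_mul, abs_two]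
  exact zero_ne_one (congrArg Zsqrtd.re (huniq.unique (hnearest 0 h₀) (hnearest 1 h₁)))

theorem exists_two_mul_re_mul_star_eq_norm {ξ : GaussianInt} (h : Even ξ.norm) :
    ∃ z : GaussianInt, 2 * (z * star ξ).re = ξ.norm := by
  obtain ⟨s, hs⟩ : Even (ξ.re + ξ.im) := by
    simpa [Zsqrtd.norm, parity_simps] using h
  refine ⟨⟨s, s - ξ.re⟩, ?_⟩
  simp only [Zsqrtd.norm, Zsqrtd.re_mul, Zsqrtd.re_star, Zsqrtd.im_star]
  linear_combination (-(ξ.re + ξ.im)) * hs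

end GaussianInt

theorem stmt12 (a b : ℤ) (hξ : (⟨a, b⟩ : GaussianInt) ≠ 0) :
    (∀ z : GaussianInt, ∃! w : GaussianInt,
        ∀ w' : GaussianInt,
          ‖GaussianInt.toComplex (z - ⟨a, b⟩ * w)‖ ≤
            ‖GaussianInt.toComplex (z - ⟨a, b⟩ * w')‖) ↔
      Odd (a ^ 2 + b ^ 2) := by
  set ξ : GaussianInt := ⟨a, b⟩
  have hN : ξ.norm = a ^ 2 + b ^ 2 := by
    simp only [ξ, Zsqrtd.norm]
    ring
  have hNpos : 0 < ξ.norm := GaussianInt.norm_pos.mpr hξ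
  simp only [GaussianInt.norm_toComplex_le_iff, GaussianInt.norm_sub_mul_le_iff hξ, ← hN]
  refine ⟨fun hclean ↦ ?_, fun hodd z ↦
    GaussianInt.existsUnique_norm_sub_intCast_mul_le hNpos hodd _⟩
  by_contra hodd
  obtain ⟨z, hz⟩ := GaussianInt.exists_two_mul_re_mul_star_eq_norm (Int.not_odd_iff_even.mp hodd)
  exact GaussianInt.not_existsUnique_norm_sub_intCast_mul_le hNpos hz (hclean z)
end

section
/- Let α and β be odd, positive, relatively prime integers. Then there is no point (w, x, y, z) ∈ ℤ⁴ with w + x + y + z even satisfying both α·x + β·z = (α² + β²)/2 and |α·w + β·y| + |−β·w + α·y| + |β·x − α·z| ≤ (α² + β²)/2. -/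
theorem stmt16 (α β : ℤ) (hαodd : Odd α) (hβodd : Odd β)
    (hαpos : 0 < α) (hβpos : 0 < β) (hcop : IsCoprime α β) :
    ¬ ∃ w x y z : ℤ, Even (w + x + y + z) ∧
        α * x + β * z = (α ^ 2 + β ^ 2) / 2 ∧
        |α * w + β * y| + |-β * w + α * y| + |β * x - α * z| ≤ (α ^ 2 + β ^ 2) / 2 := by
  rintro ⟨w, x, y, z, heven, h1, h2⟩
  obtain ⟨a, ha⟩ := hαodd
  obtain ⟨b, hb⟩ := hβodd
  set N : ℤ := 2*a^2+2*a+2*b^2+2*b+1 with hNdef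
  have h2N : α^2 + β^2 = 2 * N := by subst ha hb; ring
  have hNdiv : (α^2+β^2)/2 = N := by rw [h2N]; omega
  rw [hNdiv] at h1 h2
  have hNpos : 0 < N := by nlinarith [sq_nonneg α, sq_nonneg β]
  have hβne : β ≠ 0 := ne_of_gt hβpos
  have hcopβN : IsCoprime β N := by
    have hc1 : IsCoprime β (α^2 + β*β) := (hcop.symm.pow_right).add_mul_left_right β
    have he : α^2 + β*β = 2*N := by linear_combination h2N
    rw [he] at hc1
    exact hc1.of_mul_right_right
  have hkey : β * (β*x - α*z) = N * (2*x - α) := by linear_combination (-α) * h1 + x * h2N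
  have hdvd : β ∣ 2*x - α :=
    hcopβN.dvd_of_dvd_mul_left ⟨β*x - α*z, hkey.symm⟩
  obtain ⟨s, hs⟩ := hdvd
  have hC : β*x - α*z = N*s := by
    apply mul_left_cancel₀ hβne
    rw [hkey, hs]; ring
  have hsodd : Odd s := by
    have hbs : Odd (β*s) := ⟨x - a - 1, by omega⟩
    exact (Int.odd_mul.mp hbs).2
  have hsne : s ≠ 0 := by rintro rfl; simp at hsodd
  have habs : 1 ≤ |s| := Int.one_le_abs hsne
  have hCabs : N ≤ |β*x - α*z| := by
    rw [hC, abs_mul, abs_of_pos hNpos]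
    nlinarith
  have hA0 : α*w + β*y = 0 ∧ -β*w + α*y = 0 ∧ |s| = 1 := by
    have h3 := abs_nonneg (α*w + β*y)
    have h4 := abs_nonneg (-β*w + α*y)
    have h5 : |β*x - α*z| = N * |s| := by rw [hC, abs_mul, abs_of_pos hNpos]
    rw [h5] at h2
    constructor
    · have := abs_nonpos_iff.mp (by nlinarith : |α*w + β*y| ≤ 0)
      exact this
    constructor
    · exact abs_nonpos_iff.mp (by nlinarith : |-β*w + α*y| ≤ 0)
    · nlinarith
  obtain ⟨hA, hB, hs1⟩ := hA0
  have hw : w = 0 := by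
    have h6 : (α^2 + β^2) * w = α*(α*w+β*y) - β*(-β*w+α*y) := by ring
    rw [hA, hB, h2N] at h6
    simp at h6
    omega
  have hy : y = 0 := by
    have h6 : (α^2 + β^2) * y = β*(α*w+β*y) + α*(-β*w+α*y) := by ring
    rw [hA, hB, h2N] at h6
    simp at h6
    omega
  have hz : 2*z = β - α*s := by
    apply mul_left_cancel₀ hβne
    linear_combination 2*h1 - α*hs - h2N
  have hscase : s = 1 ∨ s = -1 := by
    rcases abs_eq (by norm_num : (0:ℤ) ≤ 1) |>.mp hs1 with h | h
    · exact Or.inl h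
    · exact Or.inr h
  obtain ⟨k, hk⟩ := heven
  rcases hscase with rfl | rfl <;> omega
end

section
/- If M > 1 is a product of primes each congruent to 1 modulo 4, then there exist integers p and q with p even, q odd, gcd(p, q) = 1, and M = p² + q². -/
/-!
Every prime `p ≡ 1 (mod 4)` is a sum `a² + b²`, with `a, b` coprime because `p` is squarefree.
Given a primitive representation `n = c² + d²`, the two Brahmagupta products
`pn = (ac - bd)² + (ad + bc)² = (ac + bd)² + (ad - bc)²` have the property that every common
divisor of either pair divides `p`; so a pair that is not coprime is divisible by `p`, and `p`
cannot divide both pairs since it would then divide `2`. Induction on the prime factors gives a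
primitive representation of `M`, and since `M` is odd exactly one of the two squares is even.
-/

theorem isRelPrime_of_squarefree_sq_add_sq {R : Type*} [CommSemiring R] {x y : R}
    (h : Squarefree (x ^ 2 + y ^ 2)) : IsRelPrime x y :=
  fun d hx hy => h d (by simpa only [sq] using dvd_add (mul_dvd_mul hx hx) (mul_dvd_mul hy hy))

section SumTwoSquares

variable {R : Type*} [CommRing R]

theorem dvd_sq_add_sq_of_dvd_of_dvd {a b c d z : R} (hcd : IsCoprime c d)
    (hx : z ∣ a * c - b * d) (hy : z ∣ a * d + b * c) : z ∣ a ^ 2 + b ^ 2 := by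
  obtain ⟨u, v, huv⟩ := hcd
  have hsq : a ^ 2 + b ^ 2 =
      (u * a - v * b) * (a * c - b * d) + (u * b + v * a) * (a * d + b * c) := by
    linear_combination (-(a ^ 2 + b ^ 2)) * huv
  rw [hsq]
  exact dvd_add (hx.mul_left _) (hy.mul_left _)

theorem dvd_two_of_dvd_of_dvd_of_dvd_of_dvd {a b c d z : R} (hab : IsCoprime a b)
    (hcd : IsCoprime c d) (h₁ : z ∣ a * c - b * d) (h₂ : z ∣ a * d + b * c)
    (h₃ : z ∣ a * c + b * d) (h₄ : z ∣ a * d - b * c) : z ∣ 2 := by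
  obtain ⟨u, v, huv⟩ := hab
  obtain ⟨s, t, hst⟩ := hcd
  have h2c : z ∣ 2 * c := by
    have : 2 * c =
        u * ((a * c - b * d) + (a * c + b * d)) + v * ((a * d + b * c) - (a * d - b * c)) := by
      linear_combination (-2 * c) * huv
    rw [this]
    exact dvd_add ((dvd_add h₁ h₃).mul_left u) ((dvd_sub h₂ h₄).mul_left v)
  have h2d : z ∣ 2 * d := by
    have : 2 * d =
        u * ((a * d + b * c) + (a * d - b * c)) + v * ((a * c + b * d) - (a * c - b * d)) := by
      linear_combination (-2 * d) * huv
    rw [this]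
    exact dvd_add ((dvd_add h₂ h₄).mul_left u) ((dvd_sub h₃ h₁).mul_left v)
  have : (2 : R) = s * (2 * c) + t * (2 * d) := by linear_combination (-2) * hst
  rw [this]
  exact dvd_add (h2c.mul_left s) (h2d.mul_left t)

variable [IsBezout R]

theorem isCoprime_or_dvd_and_dvd_of_forall_dvd {p x y : R} (hp : Irreducible p)
    (H : ∀ z, z ∣ x → z ∣ y → z ∣ p) : IsCoprime x y ∨ p ∣ x ∧ p ∣ y := by
  refine or_iff_not_imp_right.mpr fun hpxy => IsRelPrime.isCoprime fun z hzx hzy => ?_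
  rcases not_and_or.mp hpxy with hx | hy
  · exact (hp.coprime_iff_not_dvd.mpr hx).isUnit_of_dvd' (H z hzx hzy) hzx
  · exact (hp.coprime_iff_not_dvd.mpr hy).isUnit_of_dvd' (H z hzx hzy) hzy

theorem exists_isCoprime_mul_sq_add_sq {p a b c d : R} (hp : Irreducible p) (hp2 : ¬p ∣ 2)
    (hpab : p = a ^ 2 + b ^ 2) (hcd : IsCoprime c d) :
    ∃ x y : R, IsCoprime x y ∧ p * (c ^ 2 + d ^ 2) = x ^ 2 + y ^ 2 := by
  have hab : IsCoprime a b :=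
    (isRelPrime_of_squarefree_sq_add_sq (hpab ▸ hp.squarefree)).isCoprime
  have pair (e : R) (hce : IsCoprime c e) :
      IsCoprime (a * c - b * e) (a * e + b * c) ∨ p ∣ a * c - b * e ∧ p ∣ a * e + b * c :=
    isCoprime_or_dvd_and_dvd_of_forall_dvd hp fun z hx hy =>
      hpab ▸ dvd_sq_add_sq_of_dvd_of_dvd hce hx hy
  rcases pair d hcd with h₁ | ⟨h₁, h₂⟩
  · exact ⟨_, _, h₁, by rw [hpab]; ring⟩
  rcases pair (-d) hcd.neg_right with h₃ | ⟨h₃, h₄⟩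
  · exact ⟨_, _, h₃, by rw [hpab]; ring⟩
  rw [mul_neg, sub_neg_eq_add] at h₃
  rw [mul_neg, neg_add_eq_sub, ← neg_sub, dvd_neg] at h₄
  exact absurd (dvd_two_of_dvd_of_dvd_of_dvd_of_dvd hab hcd h₁ h₂ h₃ h₄) hp2

end SumTwoSquares

theorem Nat.exists_isCoprime_sq_add_sq_of_forall_prime_dvd (n : ℕ)
    (h : ∀ p : ℕ, p.Prime → p ∣ n → p % 4 = 1) :
    ∃ x y : ℤ, IsCoprime x y ∧ (n : ℤ) = x ^ 2 + y ^ 2 := by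
  induction n using induction_on_primes with
  | zero => exact absurd (h 2 Nat.prime_two (dvd_zero 2)) (by decide)
  | one => exact ⟨0, 1, isCoprime_zero_left.mpr isUnit_one, by norm_num⟩
  | prime_mul p n hp ih =>
    obtain ⟨c, d, hcd, hn⟩ := ih fun q hq hqn => h q hq (dvd_mul_of_dvd_right hqn p)
    have hp4 : p % 4 = 1 := h p hp (dvd_mul_right p n)
    have : Fact p.Prime := ⟨hp⟩
    obtain ⟨a, b, hab⟩ := Nat.Prime.sq_add_sq (p := p) (by omega)
    have hp2 : ¬(p : ℤ) ∣ 2 := by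
      rw [Int.natCast_dvd_ofNat, Nat.prime_dvd_prime_iff_eq hp Nat.prime_two]
      omega
    push_cast
    rw [hn]
    exact exists_isCoprime_mul_sq_add_sq (a := (a : ℤ)) (b := b)
      (Nat.prime_iff_prime_int.mp hp).irreducible hp2 (by exact_mod_cast hab.symm) hcd

theorem stmt19_general (M : ℕ)
    (h : ∀ p : ℕ, p.Prime → p ∣ M → p % 4 = 1) :
    ∃ p q : ℤ, Even p ∧ Odd q ∧ IsCoprime p q ∧ (M : ℤ) = p ^ 2 + q ^ 2 := by
  obtain ⟨x, y, hxy, hM⟩ := Nat.exists_isCoprime_sq_add_sq_of_forall_prime_dvd M h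
  have hodd : Odd (x ^ 2 + y ^ 2) := by
    rw [← hM, Int.odd_coe_nat, Nat.odd_iff]
    have := mt (h 2 Nat.prime_two) (by decide)
    omega
  rcases Int.even_or_odd x with hx | hx
  · have hy : Odd y := by simpa [Int.not_odd_iff_even.mpr hx, parity_simps] using hodd
    exact ⟨x, y, hx, hy, hxy, hM⟩
  · have hy : Even y := by simpa [hx, parity_simps] using hodd
    exact ⟨y, x, hy, hx, hxy.symm, by rw [hM, add_comm]⟩

theorem stmt19 (M : ℕ) (hM : 1 < M)
    (h : ∀ p : ℕ, p.Prime → p ∣ M → p % 4 = 1) :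
    ∃ p q : ℤ, Even p ∧ Odd q ∧ IsCoprime p q ∧ (M : ℤ) = p ^ 2 + q ^ 2 :=
  stmt19_general M h
end
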